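/- Let D be a dimension type with dim D = n < ∞ such that the field value of D is strictly less than n at every F ∈ primes ∪ {0} (i.e., D is a Boltyanskii dimension type). Then dim(D ⊞ D) = 2n - 1. -/

import Mathlib

/-- Signs (decorations): `-`, empty (`zero`), `+`. -/
inductive Sign : Type
  | neg | zero | pos
deriving DecidableEq

/-- The sign multiplication ⊗. -/
def Sign.mul : Sign → Sign → Sign
  | s, .zero => s
  | .zero, s => s
  | .pos, .pos => .pos
  | .neg, .neg => .neg
  | .pos, .neg => .neg
  | .neg, .pos => .neg

def Sign.toInt : Sign → ℤ
  | .neg => -1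
  | .zero => 0
  | .pos => 1

/-- The involution on signs exchanging + and -. -/
def Sign.star : Sign → Sign
  | .pos => .neg
  | .neg => .pos
  | .zero => .zero

/-- Decorated natural numbers: a base and a decoration. -/
abbrev DecNat := ℕ × Sign

/-- Lexicographic order: bases first, then decorations with `- < 0 < +`. -/
def DecNat.le (a b : DecNat) : Prop :=
  a.1 < b.1 ∨ (a.1 = b.1 ∧ a.2.toInt ≤ b.2.toInt)

def DecNat.lt (a b : DecNat) : Prop :=
  a.1 < b.1 ∨ (a.1 = b.1 ∧ a.2.toInt < b.2.toInt)

/-- The involution * on decorated naturals. -/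
def DecNat.star (a : DecNat) : DecNat := (a.1, a.2.star)

/-- The operation ⊞: add bases, multiply decorations. -/
def DecNat.bplus (a b : DecNat) : DecNat := (a.1 + b.1, a.2.mul b.2)

/-- The operation ⊕: `a ⊕ b = (a* ⊞ b*)*`. -/
def DecNat.oplus (a b : DecNat) : DecNat := ((a.star.bplus b.star)).star

/-- Adding 1 to the base, keeping the decoration. -/
def DecNat.addOne (a : DecNat) : DecNat := (a.1 + 1, a.2)

/-- `dim_{Z_(p)}` of a dimension type `D` (a function from primes ∪ {0},
encoded as ℕ, to decorated naturals, undecorated at 0). -/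
def dimZp (D : ℕ → DecNat) (p : ℕ) : ℕ :=
  match (D p).2 with
  | .pos => max (D 0).1 ((D p).1 + 1)
  | .neg => max (D 0).1 (D p).1
  | .zero => (D p).1

/-- `dim D = sup over primes p of dim_{Z_(p)} D`, valued in ℕ∞. -/
noncomputable def dimD (D : ℕ → DecNat) : ℕ∞ :=
  ⨆ p : {p : ℕ // p.Prime}, (dimZp D p.1 : ℕ∞)

/-- The maximal Boltyanskii dimension type `B n`:
`B n (p) = (n-1)⁺` at primes, `B n (0) = n-1` undecorated. -/
def Bdim (n : ℕ) : ℕ → DecNat :=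
  fun x => if x = 0 then (n - 1, Sign.zero) else (n - 1, Sign.pos)

/-!
As `dim D = n` is a finite supremum of natural numbers, it is attained: `dim_{Z_(p)} D = n` at
some prime `p`. Since every field value is below `n`, this forces `D(p) = (n-1)⁺`; then
`(D ⊞ D)(p) = (2n-2)⁺` gives `dim_{Z_(p)} (D ⊞ D) = 2n - 1`, while the bound `base < n` at every
prime and at `0` keeps every local dimension of `D ⊞ D` at most `2n - 1`.
-/

lemma Sign.mul_self (s : Sign) : s.mul s = s := by cases s <;> rfl

section LocalDimension

variable {D : ℕ → DecNat} {n q : ℕ}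

lemma sign_eq_pos_of_dimZp_eq (h0 : (D 0).1 < n) (hq : (D q).1 < n) (hdim : dimZp D q = n) :
    (D q).2 = Sign.pos ∧ (D q).1 + 1 = n := by
  unfold dimZp at hdim
  cases hs : (D q).2 <;> rw [hs] at hdim <;> dsimp only at hdim
  · omega
  · omega
  · exact ⟨rfl, by omega⟩

lemma dimZp_bplus_self (D : ℕ → DecNat) (q : ℕ) :
    dimZp (fun x => (D x).bplus (D x)) q =
      match (D q).2 with
      | .pos => max (2 * (D 0).1) (2 * (D q).1 + 1)
      | .neg => max (2 * (D 0).1) (2 * (D q).1)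
      | .zero => 2 * (D q).1 := by
  unfold dimZp DecNat.bplus
  simp only [Sign.mul_self, two_mul]

lemma dimZp_bplus_self_le (h0 : (D 0).1 < n) (hq : (D q).1 < n) :
    dimZp (fun x => (D x).bplus (D x)) q ≤ 2 * n - 1 := by
  rw [dimZp_bplus_self]
  cases (D q).2 <;> simp only [max_le_iff] <;> omega

lemma dimZp_bplus_self_of_sign_eq_pos (hpos : (D q).2 = Sign.pos) (h0 : (D 0).1 ≤ (D q).1) :
    dimZp (fun x => (D x).bplus (D x)) q = 2 * (D q).1 + 1 := by
  rw [dimZp_bplus_self, hpos]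
  exact max_eq_right (by omega)

end LocalDimension

lemma exists_prime_dimZp_eq_of_dimD_eq {D : ℕ → DecNat} {n : ℕ} (h : dimD D = n) :
    ∃ p, p.Prime ∧ dimZp D p = n := by
  have : Nonempty {p : ℕ // p.Prime} := ⟨⟨2, Nat.prime_two⟩⟩
  obtain ⟨⟨p, hp⟩, hpD⟩ := ENat.exists_eq_iSup_of_lt_top (h ▸ ENat.natCast_lt_top n : dimD D < ⊤)
  exact ⟨p, hp, by exact_mod_cast hpD.trans h⟩

theorem boltyanskii_square_general (D : ℕ → DecNat)
    (n : ℕ) (hdim : dimD D = (n : ℕ∞))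
    (hfield : ∀ F : ℕ, (F = 0 ∨ F.Prime) → (D F).1 < n) :
    dimD (fun x => (D x).bplus (D x)) = ((2 * n - 1 : ℕ) : ℕ∞) := by
  have h0 := hfield 0 (.inl rfl)
  obtain ⟨p, hp, hpn⟩ := exists_prime_dimZp_eq_of_dimD_eq hdim
  have hp_lt := hfield p (.inr hp)
  obtain ⟨hpos, hbase⟩ := sign_eq_pos_of_dimZp_eq h0 hp_lt hpn
  apply le_antisymm
  · exact iSup_le fun q => by exact_mod_cast dimZp_bplus_self_le h0 (hfield q.1 (.inr q.2))
  · refine le_iSup_of_le (⟨p, hp⟩ : {p : ℕ // p.Prime}) ?_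
    rw [dimZp_bplus_self_of_sign_eq_pos hpos (by omega)]
    exact_mod_cast (by omega : 2 * n - 1 ≤ 2 * (D p).1 + 1)

theorem boltyanskii_square (D : ℕ → DecNat) (h0 : (D 0).2 = Sign.zero)
    (n : ℕ) (hdim : dimD D = (n : ℕ∞))
    (hfield : ∀ F : ℕ, (F = 0 ∨ F.Prime) → (D F).1 < n) :
    dimD (fun x => (D x).bplus (D x)) = ((2 * n - 1 : ℕ) : ℕ∞) :=
  boltyanskii_square_general D n hdim hfield
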